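/- For n > 0, the partition function Z(n) = ∫_{ℝ²} exp(-n·w1^2·w2^2)·(1/(2π))·exp(-(w1^2+w2^2)/2) dw1 dw2 satisfies Z(n)·n^{1/2}/log n → 1/(2√π) as n → ∞. -/

import Mathlib

open Real MeasureTheory Filter

/-- Partition function for `f(w1,w2) = w1^2 w2^2`. -/
noncomputable def Za (n : ℝ) : ℝ :=
  ∫ w1 : ℝ, ∫ w2 : ℝ,
    Real.exp (-(n * (w1 ^ 2 * w2 ^ 2))) *
      (1 / (2 * π) * Real.exp (-(w1 ^ 2 + w2 ^ 2) / 2))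

/-!
Integrating out `w2` (a Gaussian integral) and rescaling `w1` by `√(2n)` gives
`Za n · √n = (2√π)⁻¹ ∫ exp (-u² / 4n) / √(1 + u²) du`. On `[0, √n]` the damping factor is
`1 - O(u² / n)`, so that piece of the (even) integrand contributes `arsinh √n + O(1)`, while the
tail beyond `√n` is `O(1)`. As `arsinh x = log x + O(1)`, the integral is `log n + O(1)`.
-/

open Set Asymptotics

namespace Real

theorem continuous_inv_sqrt_one_add_sq : Continuous fun u : ℝ => (√(1 + u ^ 2))⁻¹ :=
  .inv₀ (by fun_prop) fun u => (sqrt_pos.2 (by positivity)).ne'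

theorem integral_inv_sqrt_one_add_sq (a b : ℝ) :
    ∫ u in a..b, (√(1 + u ^ 2))⁻¹ = arsinh b - arsinh a :=
  intervalIntegral.integral_eq_sub_of_hasDerivAt (fun u _ => hasDerivAt_arsinh u)
    (continuous_inv_sqrt_one_add_sq.intervalIntegrable a b)

theorem log_two_mul_le_arsinh {x : ℝ} (hx : 0 < x) : log (2 * x) ≤ arsinh x := by
  rw [log_le_iff_le_exp (by positivity), exp_arsinh]
  linarith [le_sqrt_of_sq_le (show x ^ 2 ≤ 1 + x ^ 2 by linarith)]

theorem arsinh_le_log_three_mul {x : ℝ} (hx : 1 ≤ x) : arsinh x ≤ log (3 * x) := by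
  rw [le_log_iff_exp_le (by positivity), exp_arsinh]
  have : √(1 + x ^ 2) ≤ 2 * x := sqrt_le_iff.2 ⟨by positivity, by nlinarith⟩
  linarith

end Real

noncomputable def dampedKernel (n u : ℝ) : ℝ := exp (-(4 * n)⁻¹ * u ^ 2) * (√(1 + u ^ 2))⁻¹

lemma continuous_dampedKernel (n : ℝ) : Continuous (dampedKernel n) := by
  unfold dampedKernel
  exact (by fun_prop : Continuous fun u : ℝ => exp (-(4 * n)⁻¹ * u ^ 2)).mul
    continuous_inv_sqrt_one_add_sq

lemma dampedKernel_nonneg (n u : ℝ) : 0 ≤ dampedKernel n u := by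
  unfold dampedKernel; positivity

lemma dampedKernel_le_exp (n u : ℝ) : dampedKernel n u ≤ exp (-(4 * n)⁻¹ * u ^ 2) :=
  mul_le_of_le_one_right (exp_nonneg _)
    (inv_le_one_of_one_le₀ (one_le_sqrt.2 (le_add_of_nonneg_right (sq_nonneg u))))

lemma dampedKernel_le_inv_sqrt {n : ℝ} (hn : 0 ≤ n) (u : ℝ) :
    dampedKernel n u ≤ (√(1 + u ^ 2))⁻¹ :=
  mul_le_of_le_one_left (by positivity) (exp_le_one_iff.2 (by
    have : 0 ≤ (4 * n)⁻¹ * u ^ 2 := by positivity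
    linarith))

lemma integrable_dampedKernel {n : ℝ} (hn : 0 < n) : Integrable (dampedKernel n) :=
  (integrable_exp_neg_mul_sq (b := (4 * n)⁻¹) (by positivity)).mono'
    (continuous_dampedKernel n).aestronglyMeasurable (ae_of_all _ fun u => by
      rw [norm_of_nonneg (dampedKernel_nonneg n u)]; exact dampedKernel_le_exp n u)

lemma integral_dampedKernel_eq_two_mul (n : ℝ) :
    ∫ u, dampedKernel n u = 2 * ∫ u in Ioi 0, dampedKernel n u := by
  simpa [dampedKernel] using integral_comp_abs (f := dampedKernel n)

lemma integral_dampedKernel_le_arsinh {n s : ℝ} (hn : 0 ≤ n) (hs : 0 ≤ s) :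
    ∫ u in 0..s, dampedKernel n u ≤ arsinh s :=
  calc ∫ u in 0..s, dampedKernel n u ≤ ∫ u in 0..s, (√(1 + u ^ 2))⁻¹ :=
        intervalIntegral.integral_mono_on hs ((continuous_dampedKernel n).intervalIntegrable _ _)
          (continuous_inv_sqrt_one_add_sq.intervalIntegrable _ _)
          fun u _ => dampedKernel_le_inv_sqrt hn u
    _ = arsinh s := by rw [integral_inv_sqrt_one_add_sq, arsinh_zero, sub_zero]

-- `1 - t ≤ exp (-t)` and `u² / √(1 + u²) ≤ u ≤ s`
lemma inv_sqrt_sub_le_dampedKernel {n s u : ℝ} (hn : 0 < n) (hu : u ∈ Icc 0 s) :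
    (√(1 + u ^ 2))⁻¹ - (4 * n)⁻¹ * s ≤ dampedKernel n u := by
  obtain ⟨hu0, hus⟩ := hu
  set r := √(1 + u ^ 2)
  have hur : u ≤ r := le_sqrt_of_sq_le (by linarith)
  have hr : 0 < r := by positivity
  have hexp : 1 - (4 * n)⁻¹ * u ^ 2 ≤ exp (-(4 * n)⁻¹ * u ^ 2) := by
    linarith [add_one_le_exp (-(4 * n)⁻¹ * u ^ 2)]
  have hquot : u ^ 2 * r⁻¹ ≤ s := by
    rw [← div_eq_mul_inv, div_le_iff₀ hr]; nlinarith
  calc r⁻¹ - (4 * n)⁻¹ * s ≤ r⁻¹ - (4 * n)⁻¹ * (u ^ 2 * r⁻¹) := by gcongr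
    _ = (1 - (4 * n)⁻¹ * u ^ 2) * r⁻¹ := by ring
    _ ≤ dampedKernel n u := mul_le_mul_of_nonneg_right hexp (by positivity)

lemma arsinh_sub_le_integral_dampedKernel {n s : ℝ} (hn : 0 < n) (hs : 0 ≤ s) :
    arsinh s - (4 * n)⁻¹ * s ^ 2 ≤ ∫ u in 0..s, dampedKernel n u :=
  calc arsinh s - (4 * n)⁻¹ * s ^ 2 = ∫ u in 0..s, ((√(1 + u ^ 2))⁻¹ - (4 * n)⁻¹ * s) := by
        rw [intervalIntegral.integral_sub (continuous_inv_sqrt_one_add_sq.intervalIntegrable _ _)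
          intervalIntegrable_const, integral_inv_sqrt_one_add_sq, intervalIntegral.integral_const,
          arsinh_zero, smul_eq_mul]
        ring
    _ ≤ ∫ u in 0..s, dampedKernel n u :=
        intervalIntegral.integral_mono_on hs
          ((continuous_inv_sqrt_one_add_sq.sub continuous_const).intervalIntegrable _ _)
          ((continuous_dampedKernel n).intervalIntegrable _ _)
          fun u hu => inv_sqrt_sub_le_dampedKernel hn hu

lemma integral_Ioi_dampedKernel_le {n s : ℝ} (hn : 0 < n) (hs : 0 < s) :
    ∫ u in Ioi s, dampedKernel n u ≤ √(π * n) / s := by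
  have hgauss : Integrable fun u : ℝ => s⁻¹ * exp (-(4 * n)⁻¹ * u ^ 2) :=
    (integrable_exp_neg_mul_sq (by positivity)).const_mul _
  calc ∫ u in Ioi s, dampedKernel n u ≤ ∫ u in Ioi s, s⁻¹ * exp (-(4 * n)⁻¹ * u ^ 2) := by
        refine setIntegral_mono_on (integrable_dampedKernel hn).integrableOn hgauss.integrableOn
          measurableSet_Ioi fun u (hu : s < u) => ?_
        rw [dampedKernel, mul_comm]
        have : s ≤ √(1 + u ^ 2) := le_sqrt_of_sq_le (by nlinarith)
        gcongr
    _ ≤ ∫ u in Ioi 0, s⁻¹ * exp (-(4 * n)⁻¹ * u ^ 2) :=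
        setIntegral_mono_set hgauss.integrableOn (ae_of_all _ fun u => by positivity)
          (Ioi_subset_Ioi hs.le).eventuallyLE
    _ = √(π * n) / s := by
        rw [integral_const_mul, integral_gaussian_Ioi, div_inv_eq_mul,
          show π * (4 * n) = 2 ^ 2 * (π * n) by ring, sqrt_mul (by positivity),
          sqrt_sq zero_le_two]
        field_simp

lemma integral_Ioi_zero_dampedKernel_mem_Icc {n : ℝ} (hn : 0 < n) :
    ∫ u in Ioi 0, dampedKernel n u ∈ Icc (arsinh √n - 4⁻¹) (arsinh √n + √π) := by
  have hs : 0 < √n := sqrt_pos.2 hn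
  rw [← intervalIntegral.integral_interval_add_Ioi (b := √n)
    (integrable_dampedKernel hn).integrableOn (integrable_dampedKernel hn).integrableOn]
  have hlow := arsinh_sub_le_integral_dampedKernel hn hs.le
  have hmid := integral_dampedKernel_le_arsinh hn.le hs.le
  have htail := integral_Ioi_dampedKernel_le hn hs
  have htail0 : 0 ≤ ∫ u in Ioi √n, dampedKernel n u :=
    setIntegral_nonneg measurableSet_Ioi fun u _ => dampedKernel_nonneg n u
  rw [sq_sqrt hn.le, show (4 * n)⁻¹ * n = 4⁻¹ by field_simp] at hlow
  rw [sqrt_mul pi_pos.le, mul_div_cancel_right₀ _ hs.ne'] at htail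
  constructor <;> linarith

lemma integral_dampedKernel_sub_log_mem_Icc {n : ℝ} (hn : 1 ≤ n) :
    (∫ u, dampedKernel n u) - log n ∈ Icc (2 * log 2 - 2⁻¹) (2 * log 3 + 2 * √π) := by
  have hn0 : 0 < n := by linarith
  have hs : 0 < √n := sqrt_pos.2 hn0
  obtain ⟨hlow, hupp⟩ := integral_Ioi_zero_dampedKernel_mem_Icc hn0
  have harsinh_low := log_two_mul_le_arsinh hs
  have harsinh_upp := arsinh_le_log_three_mul (one_le_sqrt.2 hn)
  rw [log_mul two_ne_zero hs.ne', log_sqrt hn0.le] at harsinh_low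
  rw [log_mul three_ne_zero hs.ne', log_sqrt hn0.le] at harsinh_upp
  rw [integral_dampedKernel_eq_two_mul]
  constructor <;> linarith

theorem integral_dampedKernel_isEquivalent_log :
    (fun n => ∫ u, dampedKernel n u) ~[atTop] log := by
  have hbdd : (fun n => (∫ u, dampedKernel n u) - log n) =O[atTop] fun _ => (1 : ℝ) :=
    .of_bound (max |2 * log 2 - 2⁻¹| |2 * log 3 + 2 * √π|) <| by
      filter_upwards [eventually_ge_atTop 1] with n hn
      obtain ⟨hlow, hupp⟩ := integral_dampedKernel_sub_log_mem_Icc hn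
      simpa using abs_le_max_abs_abs hlow hupp
  exact hbdd.trans_isLittleO isLittleO_const_log_atTop

lemma integral_Za_integrand {n : ℝ} (hn : 0 < n) (x : ℝ) :
    ∫ w2 : ℝ, exp (-(n * (x ^ 2 * w2 ^ 2))) * (1 / (2 * π) * exp (-(x ^ 2 + w2 ^ 2) / 2))
      = (√(2 * π))⁻¹ * dampedKernel n (√(2 * n) * x) := by
  have hsplit : ∀ w2 : ℝ,
      exp (-(n * (x ^ 2 * w2 ^ 2))) * (1 / (2 * π) * exp (-(x ^ 2 + w2 ^ 2) / 2))
        = 1 / (2 * π) * exp (-x ^ 2 / 2) * exp (-(n * x ^ 2 + 2⁻¹) * w2 ^ 2) := fun w2 => by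
    rw [mul_left_comm, mul_assoc, ← exp_add, ← exp_add]; ring_nf
  have hsq : (√(2 * n) * x) ^ 2 = 2 * n * x ^ 2 := by rw [mul_pow, sq_sqrt (by positivity)]
  have hpos : 0 < 1 + 2 * n * x ^ 2 := by positivity
  simp_rw [hsplit]
  rw [integral_const_mul, integral_gaussian, dampedKernel, hsq,
    show π / (n * x ^ 2 + 2⁻¹) = 2 * π / (1 + 2 * n * x ^ 2) by field_simp; ring,
    sqrt_div' _ hpos.le, show -(4 * n)⁻¹ * (2 * n * x ^ 2) = -x ^ 2 / 2 by field_simp; ring]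
  have : 0 < √(2 * π) := by positivity
  field_simp
  rw [sq_sqrt (by positivity)]

lemma Za_mul_sqrt {n : ℝ} (hn : 0 < n) :
    Za n * √n = (2 * √π)⁻¹ * ∫ u, dampedKernel n u := by
  have hs : 0 < √(2 * n) := by positivity
  simp_rw [Za, integral_Za_integrand hn]
  rw [integral_const_mul, Measure.integral_comp_mul_left (dampedKernel n), smul_eq_mul,
    abs_of_pos (inv_pos.2 hs), sqrt_mul zero_le_two, sqrt_mul zero_le_two]
  have : 0 < √π := by positivity
  have : 0 < √n := sqrt_pos.2 hn
  field_simp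
  rw [sq_sqrt zero_le_two]
  ring

/-- `Z(n)·n^(1/2)/log n → 1/(2√π)` as `n → ∞`. -/
theorem Za_asymptotic :
    Tendsto (fun n : ℝ => Za n * n ^ (1/2 : ℝ) / Real.log n) atTop
      (nhds (1 / (2 * Real.sqrt π))) := by
  have hlog : ∀ᶠ n : ℝ in atTop, log n ≠ 0 :=
    (tendsto_log_atTop.eventually_gt_atTop 0).mono fun _ h => h.ne'
  have hratio := ((isEquivalent_iff_tendsto_one hlog).1
    integral_dampedKernel_isEquivalent_log).const_mul (2 * √π)⁻¹
  rw [mul_one, ← one_div] at hratio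
  refine hratio.congr' ?_
  filter_upwards [eventually_gt_atTop 0] with n hn
  rw [← sqrt_eq_rpow, Za_mul_sqrt hn, Pi.div_apply, mul_div_assoc, one_div]
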